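/- arXiv:2504.19379 — 2 statements merged into one kernel-verified Lean document; each statement's English description precedes it below -/
import Mathlib

section
/- Let R be either β or βη. For every n ≥ 0, the term Y_{n+1} is the unique one-step R-reduction of Y_n; that is, Y_n →_R Y_{n+1}, and if Y_n →_R M then M = Y_{n+1}. -/
/-!
Lambda terms over a variable type `V`, intrinsically taken up to
α-equivalence, via the nested-datatype ("presheaf" / well-scoped de Bruijn)
representation: the body of a λ-abstraction is a term over `Option V`,
the bound variable being `none`.
-/

/-- λ-terms over a variable type, up to α-equivalence. -/
inductive Term : Type u → Type (u + 1)
  | var {V : Type u} : V → Term V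
  | app {V : Type u} : Term V → Term V → Term V
  | lam {V : Type u} : Term (Option V) → Term V

namespace Term

/-- Renaming of (free) variables. -/
def map : {V : Type u} → {W : Type v} → (V → W) → Term V → Term W
  | _, _, f, var v => var (f v)
  | _, _, f, app M N => app (map f M) (map f N)
  | _, _, f, lam B => lam (map (Option.map f) B)

/-- Simultaneous (capture-avoiding) substitution. -/
def bind : {V : Type u} → {W : Type v} → (V → Term W) → Term V → Term W
  | _, _, f, var v => f v
  | _, _, f, app M N => app (bind f M) (bind f N)
  | _, _, f, lam B =>
      lam (bind (fun o => Option.elim o (var none) (fun v => map some (f v))) B)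

/-- The set of free variables of a term. -/
def fv : {V : Type u} → Term V → Set V
  | _, var v => {v}
  | _, app M N => fv M ∪ fv N
  | _, lam B => {v | some v ∈ fv B}

open Classical in
/-- Capture-avoiding substitution `M[v := N]`. -/
noncomputable def subst {V : Type u} (M : Term V) (v : V) (N : Term V) : Term V :=
  M.bind (fun u => if u = v then N else var u)

/-- Instantiation of the bound variable of the body of a λ-abstraction. -/
def instantiate {V : Type u} (B : Term (Option V)) (N : Term V) : Term V :=
  B.bind (fun o => Option.elim o N var)

open Classical in
/-- λ-abstraction `λ v. M` over a named variable `v`. -/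
noncomputable def abs {V : Type u} (v : V) (M : Term V) : Term V :=
  lam (M.map (fun u => if u = v then none else some u))

end Term

/-- A term is closed if it has no free variables. -/
def Closed {V : Type u} (M : Term V) : Prop := Term.fv M = ∅

/-- The β relation: `((λv.M)N, M[v := N])`. -/
def Beta {V : Type u} (M N : Term V) : Prop :=
  ∃ B P, M = Term.app (Term.lam B) P ∧ N = Term.instantiate B P

/-- The η relation: `((λv. M v), M)` with `v ∉ FV(M)`. -/
def Eta {V : Type u} (M N : Term V) : Prop :=
  M = Term.lam (Term.app (N.map some) (Term.var none))

/-- The βη relation. -/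
def BetaEta {V : Type u} (M N : Term V) : Prop := Beta M N ∨ Eta M N

/-- One-step `R`-reduction: the least compatible relation containing `R`. -/
inductive Step {V : Type u} (R : Term V → Term V → Prop) : Term V → Term V → Prop
  | base {M N : Term V} : R M N → Step R M N
  | appL {M M' N : Term V} : Step R M M' → Step R (Term.app M N) (Term.app M' N)
  | appR {M N N' : Term V} : Step R N N' → Step R (Term.app M N) (Term.app M N')
  | abs (v : V) {M M' : Term V} : Step R M M' → Step R (Term.abs v M) (Term.abs v M')

/-- `R`-reduction `→→_R`: the least preorder containing one-step `R`-reduction. -/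
def Red {V : Type u} (R : Term V → Term V → Prop) : Term V → Term V → Prop :=
  Relation.ReflTransGen (Step R)

/-- `R`-equivalence `≈_R`: the least equivalence relation containing `→_R`. -/
def REquiv {V : Type u} (R : Term V → Term V → Prop) : Term V → Term V → Prop :=
  Relation.EqvGen (Step R)

/-- A term is `R`-reduced if it admits no one-step `R`-reduction. -/
def Reduced {V : Type u} (R : Term V → Term V → Prop) (M : Term V) : Prop :=
  ¬ ∃ N, Step R M N

/-- `N` is an `R`-normal form of `M`. -/
def IsNormalFormOf {V : Type u} (R : Term V → Term V → Prop) (M N : Term V) : Prop :=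
  Reduced R N ∧ REquiv R M N

/-- The preorder `≤_R`. -/
def LeR {V : Type u} (R : Term V → Term V → Prop) (F G : Term V) : Prop :=
  ∀ N : Term V, Closed N → ∀ N' : Term V,
    IsNormalFormOf R (Term.app F N) N' → IsNormalFormOf R (Term.app G N) N'

/-- `R_{F,y} = R ∪ S_{F,y}` where `S_{F,y} = {(y, F y)}`. -/
def Rfy {V : Type u} (R : Term V → Term V → Prop) (F : Term V) (y : V) :
    Term V → Term V → Prop :=
  fun A B => R A B ∨ (A = Term.var y ∧ B = Term.app F (Term.var y))

/-- Curry's fixed point combinator `Y = λf.(λg.f(gg))(λg.f(gg))`. -/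
def Y {V : Type u} : Term V :=
  Term.lam (Term.app
    (Term.lam (Term.app (Term.var (some none))
      (Term.app (Term.var none) (Term.var none))))
    (Term.lam (Term.app (Term.var (some none))
      (Term.app (Term.var none) (Term.var none)))))

/-- `λg. M (g g)` with `g` fresh. -/
def halfY {V : Type u} (M : Term V) : Term V :=
  Term.lam (Term.app (M.map some) (Term.app (Term.var none) (Term.var none)))

/-- `Y_{M,N} = (λg. M (g g)) (λg. N (g g))` with `g ∉ FV(M) ∪ FV(N)`. -/
def Ypair {V : Type u} (M N : Term V) : Term V := Term.app (halfY M) (halfY N)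

/-- `M^{(n)} N`: `n`-fold application of `M` to `N`. -/
def iterApp {V : Type u} (M : Term V) : ℕ → Term V → Term V
  | 0, N => N
  | n + 1, N => Term.app M (iterApp M n N)

/-- `Y_n = λf. f^{(n)} Y_{f,f}`. -/
def Yn {V : Type u} (n : ℕ) : Term V :=
  Term.lam (iterApp (Term.var none) n (Ypair (Term.var none) (Term.var none)))

/-- `Υ_F = { Y_n F' : F →→_R F', n ≥ 0 } ∪ { Y_{F',F''} : F →→_R F', F →→_R F'' }`. -/
def Upsilon {V : Type u} (R : Term V → Term V → Prop) (F : Term V) : Set (Term V) :=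
  {M | ∃ (n : ℕ) (F' : Term V), Red R F F' ∧ M = Term.app (Yn n) F'} ∪
  {M | ∃ F' F'' : Term V, Red R F F' ∧ Red R F F'' ∧ M = Ypair F' F''}

/-- The extended variable set `Ṽ_F = V ∪ V'_F`, where `V'_F` is a set
disjoint from `V` in bijection with `Υ_F`. -/
def ExtV {V : Type u} (R : Term V → Term V → Prop) (F : Term V) : Type (u + 1) :=
  V ⊕ {K : Term V // K ∈ Upsilon R F}

/-- The realization map `ρ : Λ̃_F → Λ`, substituting `K` for each `v_K ∈ V'_F`. -/
def realize {V : Type u} {R : Term V → Term V → Prop} {F : Term V} :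
    Term (ExtV R F) → Term V :=
  Term.bind (Sum.elim Term.var (fun K => K.1))

/-- The flattening map `φ_y : Λ̃_F → Λ`, substituting `y` for every variable in `V'_F`. -/
def flatten {V : Type u} {R : Term V → Term V → Prop} {F : Term V} (y : V) :
    Term (ExtV R F) → Term V :=
  Term.bind (Sum.elim Term.var (fun _ => Term.var y))

/-- `λx.λy. y (x x y)`. -/
def thetaHalf {V : Type u} : Term V :=
  Term.lam (Term.lam (Term.app (Term.var none)
    (Term.app (Term.app (Term.var (some none)) (Term.var (some none)))
      (Term.var none))))

/-- Turing's fixed point combinator `Θ = (λx.λy.y(xxy))(λx.λy.y(xxy))`. -/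
def Theta {V : Type u} : Term V := Term.app thetaHalf thetaHalf


/-!
In `Y_n = λf. f^{(n)} Y_{f,f}` the only redex is `Y_{f,f} = (λg. f(gg))(λg. f(gg))`, which
β-reduces to `f Y_{f,f}`, turning the body of `Y_n` into that of `Y_{n+1}`. Nothing else
reduces: the halves `λg. f(gg)` have λ-free bodies that do not end in `g`, so they are neither
redexes nor η-redexes, and `Y_n` is no η-redex because its body does not end in `f`.
A reduction under the binder of `Y_n` goes through a named abstraction `λw. M`; the renaming
`M ↦ λw. M` is injective, so `M = w^{(n)} Y_{w,w}` and the reduct is `λw. w^{(n+1)} Y_{w,w}`.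
-/

namespace Term

variable {V W W' : Type*}

theorem map_injective {f : V → W} (hf : Function.Injective f) :
    Function.Injective (map f : Term V → Term W) := by
  intro M N h
  induction M generalizing W with
  | var v => cases N <;> simp_all [map, hf.eq_iff]
  | app A B ihA ihB =>
    cases N <;> simp only [map, reduceCtorEq, app.injEq] at h
    exact congrArg₂ app (ihA hf h.1) (ihB hf h.2)
  | lam B ih =>
    cases N <;> simp only [map, reduceCtorEq, lam.injEq] at h
    exact congrArg lam (ih (Option.map_injective hf) h)

theorem map_map (f : V → W) (g : W → W') (M : Term V) :
    (M.map f).map g = M.map (g ∘ f) := by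
  induction M generalizing W W' with
  | var v => rfl
  | app A B ihA ihB => simp only [map, ihA, ihB]
  | lam B ih => simp only [map, ih, Option.map_comp_map]

theorem bind_map (f : V → W) (g : W → Term W') (M : Term V) :
    (M.map f).bind g = M.bind (g ∘ f) := by
  induction M generalizing W W' with
  | var v => rfl
  | app A B ihA ihB => simp only [map, bind, ihA, ihB]
  | lam B ih =>
    simp only [map, bind, ih]
    congr 2
    funext o
    cases o <;> rfl

theorem bind_var (M : Term V) : M.bind var = M := by
  induction M with
  | var v => rfl
  | app A B ihA ihB => simp only [bind, ihA, ihB]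
  | lam B ih =>
    simp only [bind]
    conv_rhs => rw [← ih]
    congr 2
    funext o
    cases o <;> rfl

theorem instantiate_map_some (M N : Term V) : instantiate (M.map some) N = M := by
  rw [instantiate, bind_map]
  exact bind_var M

theorem abs_injective (v : V) : Function.Injective (abs v) := by
  intro M N h
  refine map_injective (fun a b hab => ?_) (lam.inj h)
  by_cases ha : a = v <;> by_cases hb : b = v <;> simp_all

theorem map_halfY (f : V → W) (M : Term V) : (halfY M).map f = halfY (M.map f) := by
  simp only [halfY, map, map_map]
  rfl

theorem map_iterApp (f : V → W) (F X : Term V) (n : ℕ) :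
    (iterApp F n X).map f = iterApp (F.map f) n (X.map f) := by
  induction n with
  | zero => rfl
  | succ n ih => simp only [iterApp, map, ih]

theorem iterApp_app (F X : Term V) (n : ℕ) : iterApp F n (app F X) = iterApp F (n + 1) X := by
  induction n with
  | zero => rfl
  | succ n ih => simp only [iterApp, ih]

def LamFree : {V : Type*} → Term V → Prop
  | _, var _ => True
  | _, app M N => LamFree M ∧ LamFree N
  | _, lam _ => False

theorem LamFree.of_map {f : V → W} {M : Term V} (h : LamFree (M.map f)) : LamFree M := by
  induction M generalizing W with
  | var v => trivial
  | app A B ihA ihB => exact ⟨ihA h.1, ihB h.2⟩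
  | lam B ih => exact h.elim

theorem LamFree.not_step {R : Term V → Term V → Prop} (hR : Subrelation R BetaEta)
    {M N : Term V} (hM : LamFree M) : ¬ Step R M N := by
  intro h
  induction h with
  | base h =>
    rcases hR h with ⟨B, P, rfl, -⟩ | rfl
    exacts [hM.1, hM]
  | appL _ ih => exact ih hM.1
  | appR _ ih => exact ih hM.2
  | abs v _ _ => exact hM

end Term

open Term

section

variable {V : Type*}

def iterYpair (F : Term V) (n : ℕ) : Term V := iterApp F n (Ypair F F)

theorem abs_iterYpair_var (v : V) (n : ℕ) : Term.abs v (iterYpair (var v) n) = Yn n := by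
  simp only [Term.abs, iterYpair, Ypair, map_iterApp, map, map_halfY]
  rfl

theorem beta_Ypair (F G : Term V) : Beta (Ypair F G) (app F (Ypair G G)) :=
  ⟨_, _, rfl, congrArg (app · _) (instantiate_map_some F (halfY G)).symm⟩

namespace Step

variable {R : Term V → Term V → Prop}

theorem iterApp_congr (F : Term V) (n : ℕ) {X X' : Term V} (h : Step R X X') :
    Step R (iterApp F n X) (iterApp F n X') := by
  induction n with
  | zero => exact h
  | succ n ih => exact appR ih

theorem iterYpair_succ (hR : Subrelation Beta R) (F : Term V) (n : ℕ) :
    Step R (iterYpair F n) (iterYpair F (n + 1)) := by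
  simpa only [iterYpair, iterApp_app] using iterApp_congr F n (base (hR (beta_Ypair F F)))

theorem app_cases {A B N : Term V} (h : Step R (app A B) N) :
    R (app A B) N ∨ (∃ A', Step R A A' ∧ N = app A' B) ∨ ∃ B', Step R B B' ∧ N = app A B' := by
  generalize hM : app A B = M at h
  cases h with
  | base h => exact .inl (hM ▸ h)
  | appL h => cases hM; exact .inr (.inl ⟨_, h, rfl⟩)
  | appR h => cases hM; exact .inr (.inr ⟨_, h, rfl⟩)
  | abs v h => cases hM

theorem lam_cases {B : Term (Option V)} {N : Term V} (h : Step R (lam B) N) :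
    R (lam B) N ∨ ∃ v M M', Term.abs v M = lam B ∧ Step R M M' ∧ N = Term.abs v M' := by
  generalize hM : lam B = M at h
  cases h with
  | base h => exact .inl h
  | appL h => cases hM
  | appR h => cases hM
  | abs v h => exact .inr ⟨v, _, _, rfl, h, rfl⟩

theorem not_halfY_var (hR : Subrelation R BetaEta) (v : V) {N : Term V} :
    ¬ Step R (halfY (var v)) N := by
  intro h
  rcases lam_cases h with hRel | ⟨w, M, M', hM, hStep, -⟩
  · rcases hR hRel with ⟨_, _, hEq, -⟩ | hEta
    · cases hEq
    · simp [Eta] at hEta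
  · have hBody : LamFree (app (var (some v)) (app (var none) (var none))) :=
      ⟨trivial, trivial, trivial⟩
    exact (LamFree.of_map (lam.inj hM ▸ hBody)).not_step hR hStep

theorem eq_iterYpair_var_succ (hR : Subrelation R BetaEta) (v : V) (n : ℕ) {N : Term V}
    (h : Step R (iterYpair (var v) n) N) : N = iterYpair (var v) (n + 1) := by
  induction n generalizing N with
  | zero =>
    rcases app_cases h with hRel | ⟨_, hStep, -⟩ | ⟨_, hStep, -⟩
    · rcases hR hRel with ⟨B, P, hEq, rfl⟩ | hEta
      · cases hEq
        rfl
      · cases hEta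
    · exact absurd hStep (not_halfY_var hR v)
    · exact absurd hStep (not_halfY_var hR v)
  | succ n ih =>
    rcases app_cases h with hRel | ⟨_, hStep, -⟩ | ⟨_, hStep, rfl⟩
    · rcases hR hRel with ⟨_, _, hEq, -⟩ | hEta
      · cases hEq
      · cases hEta
    · exact absurd hStep (LamFree.not_step hR trivial)
    · rw [ih hStep]
      rfl

theorem eq_Yn_succ (hR : Subrelation R BetaEta) (n : ℕ) {N : Term V} (h : Step R (Yn n) N) :
    N = Yn (n + 1) := by
  rcases lam_cases h with hRel | ⟨w, M, M', hM, hStep, rfl⟩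
  · have hEta : Eta (Yn n) N := (hR hRel).resolve_left fun ⟨_, _, hEq, _⟩ => by cases hEq
    rcases n with _ | _ | n <;> simp [Yn, iterApp, Ypair, halfY, Eta] at hEta
  · obtain rfl : M = iterYpair (var w) n :=
      abs_injective w (hM.trans (abs_iterYpair_var w n).symm)
    rw [eq_iterYpair_var_succ hR w n hStep, abs_iterYpair_var]

end Step

end

/-- Let `R` be β or βη. For every `n ≥ 0`, the term `Y_{n+1}`
is the unique one-step `R`-reduction of `Y_n`. -/
theorem Yn_unique_step {V : Type} [Infinite V]
    (R : Term V → Term V → Prop) (hR : R = @Beta V ∨ R = @BetaEta V)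
    (n : ℕ) :
    Step R (Yn n) (Yn (n + 1)) ∧
      ∀ M : Term V, Step R (Yn n) M → M = Yn (n + 1) := by
  obtain ⟨v⟩ : Nonempty V := inferInstance
  have hBeta : Subrelation Beta R := by
    rcases hR with rfl | rfl
    exacts [id, Or.inl]
  have hBetaEta : Subrelation R BetaEta := by
    rcases hR with rfl | rfl
    exacts [Or.inl, id]
  refine ⟨?_, fun M => Step.eq_Yn_succ hBetaEta n⟩
  simpa only [abs_iterYpair_var] using Step.abs v (Step.iterYpair_succ hBeta (var v) n)
end

section
/- Let R be either β or βη and fix a λ-term F. For any term M with variables in Ṽ_F = V ∪ V'_F, if ρ(M) is R-reduced, then M contains no free variables from V'_F (so M = ρ(M) is an ordinary λ-term). -/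
/-!
Every element of `Υ_F` is a β-redex, and `ρ` puts it at each free occurrence of the
corresponding primed variable. A redex at a free-variable position of `M` survives in the
substituted term: under a binder, renaming the bound variable to a name fresh for the term
(one exists since `V` is infinite) makes the step an instance of the `abs` rule of `Step`.
-/

namespace Term

theorem fv_finite : ∀ {W : Type v} (M : Term W), (fv M).Finite
  | _, var v => Set.finite_singleton v
  | _, app M N => (fv_finite M).union (fv_finite N)
  | _, lam B => (fv_finite B).preimage (Option.some_injective _).injOn

theorem bind_congr : ∀ {W : Type v} {X : Type w} (M : Term W) (f g : W → Term X),
    (∀ x ∈ fv M, f x = g x) → bind f M = bind g M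
  | _, _, var v, f, g, h => h v rfl
  | _, _, app M N, f, g, h => by
      simp only [bind]
      rw [bind_congr M f g (fun x hx => h x (Or.inl hx)),
        bind_congr N f g (fun x hx => h x (Or.inr hx))]
  | _, _, lam B, f, g, h => by
      simp only [bind]
      congr 1
      refine bind_congr B _ _ ?_
      rintro (_ | x) hx
      · rfl
      · simp only [Option.elim, h x hx]

theorem bind_var_s10 : ∀ {W : Type v} (M : Term W), bind var M = M
  | _, var v => rfl
  | _, app M N => by simp only [bind, bind_var_s10 M, bind_var_s10 N]
  | _, lam B => by
      simp only [bind]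
      rw [bind_congr B _ var (by rintro (_ | x) _ <;> rfl), bind_var_s10 B]

theorem map_map_s10 : ∀ {U : Type u'} {W : Type v} {X : Type w} (M : Term U)
    (f : U → W) (g : W → X), map g (map f M) = map (g ∘ f) M
  | _, _, _, var v, f, g => rfl
  | _, _, _, app M N, f, g => by simp only [map, map_map_s10 M, map_map_s10 N]
  | _, _, _, lam B, f, g => by
      simp only [map, map_map_s10 B]
      exact congrArg (fun h => lam (map h B)) (funext fun o => by cases o <;> rfl)

theorem bind_map_s10 : ∀ {U : Type u'} {W : Type v} {X : Type w} (M : Term U)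
    (f : U → W) (g : W → Term X), bind g (map f M) = bind (g ∘ f) M
  | _, _, _, var v, f, g => rfl
  | _, _, _, app M N, f, g => by simp only [map, bind, bind_map_s10 M, bind_map_s10 N]
  | _, _, _, lam B, f, g => by
      simp only [map, bind, bind_map_s10 B]
      exact congrArg (fun h => lam (bind h B)) (funext fun o => by cases o <;> rfl)

theorem map_bind : ∀ {U : Type u'} {W : Type v} {X : Type w} (M : Term U)
    (f : U → Term W) (g : W → X), map g (bind f M) = bind (fun x => map g (f x)) M
  | _, _, _, var v, f, g => rfl
  | _, _, _, app M N, f, g => by simp only [map, bind, map_bind M, map_bind N]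
  | _, _, _, lam B, f, g => by
      simp only [map, bind, map_bind B]
      refine congrArg (fun h => lam (bind h B)) (funext fun o => ?_)
      cases o with
      | none => rfl
      | some x => simp only [Option.elim, map_map_s10]; rfl

theorem bind_bind : ∀ {U : Type u'} {W : Type v} {X : Type w} (M : Term U)
    (f : U → Term W) (g : W → Term X),
    bind g (bind f M) = bind (fun x => bind g (f x)) M
  | _, _, _, var v, f, g => rfl
  | _, _, _, app M N, f, g => by simp only [bind, bind_bind M, bind_bind N]
  | _, _, _, lam B, f, g => by
      simp only [bind, bind_bind B]
      refine congrArg (fun h => lam (bind h B)) (funext fun o => ?_)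
      cases o with
      | none => rfl
      | some x => simp only [Option.elim, bind_map_s10, map_bind]; rfl

theorem lam_eq_abs {V : Type u} (B : Term (Option V)) (v : V) (hv : v ∉ fv (lam B)) :
    lam B = abs v (instantiate B (var v)) := by
  unfold abs instantiate
  rw [map_bind]
  congr 1
  refine ((bind_congr B _ var ?_).trans (bind_var_s10 B)).symm
  rintro (_ | u) hu
  · simp [map, Option.elim]
  · have hne : u ≠ v := by rintro rfl; exact hv hu
    simp [map, Option.elim, hne]

theorem bind_lam_eq_abs {V : Type u} {W : Type v} (f : W → Term V) (B : Term (Option W))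
    (v : V) (hv : v ∉ fv (bind f (lam B))) :
    bind f (lam B) = abs v (bind (fun o => Option.elim o (var v) f) B) := by
  rw [bind, lam_eq_abs _ v hv]
  unfold instantiate
  rw [bind_bind]
  refine congrArg (abs v) (bind_congr B _ _ ?_)
  rintro (_ | u) _
  · rfl
  · simp only [Option.elim, bind_map_s10]
    exact bind_var_s10 _

end Term

open Term

theorem not_reduced_bind {V : Type u} [Infinite V] {R : Term V → Term V → Prop}
    {W : Type v} {M : Term W} {f : W → Term V} {x : W} (hx : x ∈ fv M)
    (hfx : ¬ Reduced R (f x)) : ¬ Reduced R (bind f M) := by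
  induction M with
  | var w => rwa [Set.mem_singleton_iff.mp hx] at hfx
  | app A B ihA ihB =>
    rintro h
    rcases hx with hx | hx
    · exact ihA hx hfx fun ⟨N, hN⟩ => h ⟨_, Step.appL hN⟩
    · exact ihB hx hfx fun ⟨N, hN⟩ => h ⟨_, Step.appR hN⟩
  | lam B ih =>
    rintro h
    obtain ⟨v, hv⟩ := (fv_finite (bind f (lam B))).exists_notMem
    rw [bind_lam_eq_abs f B v hv] at h
    exact ih (f := fun o => Option.elim o (var v) f) hx hfx
      fun ⟨N, hN⟩ => h ⟨_, Step.abs v hN⟩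

theorem beta_le_of_eq_beta_or_betaEta {V : Type u} {R : Term V → Term V → Prop}
    (hR : R = @Beta V ∨ R = @BetaEta V) : @Beta V ≤ R := by
  rcases hR with rfl | rfl
  exacts [le_rfl, fun _ _ => Or.inl]

theorem not_reduced_app_lam {V : Type u} {R : Term V → Term V → Prop} (hβ : @Beta V ≤ R)
    (B : Term (Option V)) (P : Term V) : ¬ Reduced R (app (lam B) P) :=
  fun h => h ⟨_, Step.base (hβ _ _ ⟨B, P, rfl, rfl⟩)⟩

theorem not_reduced_of_mem_upsilon {V : Type u} {R : Term V → Term V → Prop}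
    (hβ : @Beta V ≤ R) {F K : Term V} (hK : K ∈ Upsilon R F) : ¬ Reduced R K := by
  rcases hK with ⟨n, F', -, rfl⟩ | ⟨F', F'', -, -, rfl⟩ <;> exact not_reduced_app_lam hβ _ _

/-- Let `R` be β or βη and fix a λ-term `F`. For any term `M`
over `Ṽ_F = V ∪ V'_F`, if `ρ(M)` is `R`-reduced, then `M` contains no free
variables from `V'_F`. -/
theorem no_primed_fv_of_realize_reduced {V : Type} [Infinite V]
    (R : Term V → Term V → Prop) (hR : R = @Beta V ∨ R = @BetaEta V)
    (F : Term V) (M : Term (ExtV R F))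
    (h : Reduced R (realize M)) :
    ∀ x ∈ Term.fv M, ∃ v : V, x = Sum.inl v := by
  rintro (v | K) hx
  · exact ⟨v, rfl⟩
  · exact absurd h <| not_reduced_bind hx <|
      not_reduced_of_mem_upsilon (beta_le_of_eq_beta_or_betaEta hR) K.2
end
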